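/- arXiv:2508.14310 — 2 statements merged into one kernel-verified Lean document; each statement's English description precedes it below -/
import Mathlib

section
/- For every vector field η in H^1 on the box Ω_b = (0,L)^2 × (0,R) (with values in ℝ^3) that vanishes on the lateral boundaries x,y ∈ {0,L} and on the top boundary z = R, and whose first two components vanish on the bottom face z = 0, the following Korn equality-type inequality holds: ∫_{Ω_b} |D(η)|^2 dx ≥ (1/2) ∫_{Ω_b} |∇η|^2 dx, where D(η) = (∇η + ∇η^T)/2 is the symmetric gradient. -/
open MeasureTheory Filter Metric Set ContinuousLinearMap
open scoped Convolution Topology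

lemma pi_Ioo_ae_eq_Icc {m : ℕ} (a b : Fin m → ℝ) :
    (Set.pi Set.univ fun i => Set.Ioo (a i) (b i)) =ᵐ[volume] Set.Icc a b := by
  apply ae_eq_of_subset_of_measure_ge
  · intro x hx
    simp only [Set.mem_pi, Set.mem_univ, forall_true_left, Set.mem_Ioo] at hx
    exact ⟨fun i => (hx i).1.le, fun i => (hx i).2.le⟩
  · rw [Real.volume_Icc_pi, volume_pi_pi]
    simp [Real.volume_Ioo]
  · exact (MeasurableSet.univ_pi fun i => measurableSet_Ioo).nullMeasurableSet
  · rw [Real.volume_Icc_pi]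
    exact (ENNReal.prod_lt_top (fun i _ => ENNReal.ofReal_lt_top)).ne

noncomputable def dv (v : Fin 3 → (Fin 3 → ℝ) → ℝ) (a b : Fin 3) (x : Fin 3 → ℝ) : ℝ :=
  fderiv ℝ (v a) x (Pi.single b 1)

noncomputable def Fd (v : Fin 3 → (Fin 3 → ℝ) → ℝ) (j : Fin 3) (x : Fin 3 → ℝ) : ℝ :=
  ∑ i, (v i x * dv v j i x - v j x * dv v i i x)

lemma contDiff_dv {u : (Fin 3 → ℝ) → ℝ} (hu : ContDiff ℝ 2 u) (b : Fin 3) :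
    ContDiff ℝ 1 (fun x => fderiv ℝ u x (Pi.single b 1)) :=
  (hu.fderiv_right (by norm_num)).clm_apply contDiff_const

lemma contDiff_Fd {v : Fin 3 → (Fin 3 → ℝ) → ℝ} (hv : ∀ i, ContDiff ℝ 2 (v i)) (j : Fin 3) :
    ContDiff ℝ 1 (Fd v j) := by
  refine ContDiff.sum fun i _ => ContDiff.sub ?_ ?_
  · exact ((hv i).of_le one_le_two).mul (contDiff_dv (hv j) i)
  · exact ((hv j).of_le one_le_two).mul (contDiff_dv (hv i) i)

lemma fderiv_dv {u : (Fin 3 → ℝ) → ℝ} (hu : ContDiff ℝ 2 u) (b : Fin 3) (x w : Fin 3 → ℝ) :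
    fderiv ℝ (fun y => fderiv ℝ u y (Pi.single b 1)) x w
      = fderiv ℝ (fderiv ℝ u) x w (Pi.single b 1) := by
  rw [fderiv_clm_apply (((hu.fderiv_right (m := 1) (by norm_num)).differentiable one_ne_zero) x)
    (differentiableAt_const _)]
  simp

lemma div_Fd {v : Fin 3 → (Fin 3 → ℝ) → ℝ} (hv : ∀ i, ContDiff ℝ 2 (v i)) (x : Fin 3 → ℝ) :
    ∑ j, fderiv ℝ (Fd v j) x (Pi.single j 1)
      = (∑ i, ∑ j, dv v i j x * dv v j i x) - (∑ i, dv v i i x) ^ 2 := by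
  have hud : ∀ a, DifferentiableAt ℝ (v a) x :=
    fun a => ((hv a).differentiable two_ne_zero) x
  have hDd : ∀ a b, DifferentiableAt ℝ (fun y => fderiv ℝ (v a) y (Pi.single b 1)) x :=
    fun a b => ((contDiff_dv (hv a) b).differentiable one_ne_zero) x
  have key : ∀ j, fderiv ℝ (Fd v j) x (Pi.single j 1)
      = ∑ i, (dv v i j x * dv v j i x
            + v i x * fderiv ℝ (fderiv ℝ (v j)) x (Pi.single j 1) (Pi.single i 1)
            - (dv v j j x * dv v i i x
            + v j x * fderiv ℝ (fderiv ℝ (v i)) x (Pi.single j 1) (Pi.single i 1))) := by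
    intro j
    unfold Fd dv
    rw [fderiv_fun_sum (fun i _ => (((hud i).fun_mul (hDd j i)).fun_sub ((hud j).fun_mul (hDd i i))))]
    rw [ContinuousLinearMap.sum_apply]
    refine Finset.sum_congr rfl fun i _ => ?_
    rw [fderiv_fun_sub ((hud i).fun_mul (hDd j i)) ((hud j).fun_mul (hDd i i))]
    rw [ContinuousLinearMap.sub_apply]
    rw [fderiv_fun_mul (hud i) (hDd j i), fderiv_fun_mul (hud j) (hDd i i)]
    simp only [ContinuousLinearMap.add_apply, ContinuousLinearMap.smul_apply, smul_eq_mul]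
    rw [fderiv_dv (hv j) i x, fderiv_dv (hv i) i x]
    ring
  simp only [key]
  have hsymm : ∀ a (w w' : Fin 3 → ℝ), fderiv ℝ (fderiv ℝ (v a)) x w w'
      = fderiv ℝ (fderiv ℝ (v a)) x w' w :=
    fun a => ((hv a).contDiffAt.isSymmSndFDerivAt (by simp))
  have e1 : ∀ j i : Fin 3, (dv v i j x * dv v j i x
            + v i x * fderiv ℝ (fderiv ℝ (v j)) x (Pi.single j 1) (Pi.single i 1)
            - (dv v j j x * dv v i i x
            + v j x * fderiv ℝ (fderiv ℝ (v i)) x (Pi.single j 1) (Pi.single i 1)))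
      = (dv v i j x * dv v j i x - dv v j j x * dv v i i x)
        + (v i x * fderiv ℝ (fderiv ℝ (v j)) x (Pi.single j 1) (Pi.single i 1)
          - v j x * fderiv ℝ (fderiv ℝ (v i)) x (Pi.single j 1) (Pi.single i 1)) := by
    intro j i; ring
  simp only [e1]
  rw [Finset.sum_congr rfl (fun j _ => Finset.sum_add_distrib), Finset.sum_add_distrib]
  have hcancel : ∑ j : Fin 3, ∑ i : Fin 3,
      (v i x * fderiv ℝ (fderiv ℝ (v j)) x (Pi.single j 1) (Pi.single i 1)
        - v j x * fderiv ℝ (fderiv ℝ (v i)) x (Pi.single j 1) (Pi.single i 1)) = 0 := by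
    rw [Finset.sum_congr rfl (fun j _ => Finset.sum_sub_distrib _ _), Finset.sum_sub_distrib]
    rw [sub_eq_zero]
    rw [Finset.sum_comm]
    exact Finset.sum_congr rfl fun j _ => Finset.sum_congr rfl fun i _ => by rw [hsymm i]
  rw [hcancel, add_zero]
  rw [Finset.sum_congr rfl (fun j _ => Finset.sum_sub_distrib _ _), Finset.sum_sub_distrib]
  congr 1
  · exact Finset.sum_comm
  · rw [sq, Finset.sum_mul_sum]

lemma fderiv_single_eq_zero {f : (Fin 3 → ℝ) → ℝ} {p : Fin 3 → ℝ} {e : Fin 3 → ℝ}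
    (hf : DifferentiableAt ℝ f p) (hloc : ∀ᶠ t : ℝ in 𝓝 0, f (p + t • e) = 0) :
    fderiv ℝ f p e = 0 := by
  have hc : HasDerivAt (fun t : ℝ => p + t • e) e 0 := by
    simpa using ((hasDerivAt_id (0:ℝ)).smul_const e).const_add p
  have h1 : HasDerivAt (fun t : ℝ => f (p + t • e)) (fderiv ℝ f p e) 0 := by
    have hf' : HasFDerivAt f (fderiv ℝ f p) (p + (0:ℝ) • e) := by
      simpa using hf.hasFDerivAt
    exact hf'.comp_hasDerivAt 0 hc
  have h2 : HasDerivAt (fun t : ℝ => f (p + t • e)) 0 0 :=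
    (hasDerivAt_const (0:ℝ) (0:ℝ)).congr_of_eventuallyEq (by
      filter_upwards [hloc] with t ht; simp [ht])
  exact h1.unique h2

set_option maxHeartbeats 2000000 in
theorem cross_nonneg (b : Fin 3 → ℝ) (hb : ∀ i, 0 < b i)
    (g : (Fin 3 → ℝ) → (Fin 3 → ℝ)) (hg : ContDiff ℝ 1 g)
    (hcs : ∀ i, HasCompactSupport (fun x => g x i))
    (h0 : ∀ p ∈ Set.Icc (0 : Fin 3 → ℝ) b,
      (p 0 = 0 ∨ p 0 = b 0 ∨ p 1 = 0 ∨ p 1 = b 1 ∨ p 2 = b 2) → g p = 0)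
    (h2 : ∀ p ∈ Set.Icc (0 : Fin 3 → ℝ) b, p 2 = 0 → g p 0 = 0 ∧ g p 1 = 0) :
    0 ≤ ∫ x in Set.Icc (0 : Fin 3 → ℝ) b,
        ∑ i, ∑ j, fderiv ℝ (fun y => g y i) x (Pi.single j 1)
          * fderiv ℝ (fun y => g y j) x (Pi.single i 1) := by
  have hGi : ∀ i : Fin 3, ContDiff ℝ 1 (fun x => g x i) :=
    fun i => (ContinuousLinearMap.proj (R := ℝ) (φ := fun _ : Fin 3 => ℝ) i).contDiff.comp hg
  set Dg : Fin 3 → Fin 3 → (Fin 3 → ℝ) → ℝ :=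
    fun i j x => fderiv ℝ (fun y => g y i) x (Pi.single j 1) with hDg
  have hDgc : ∀ i j, Continuous (Dg i j) := fun i j =>
    (((hGi i).continuous_fderiv one_ne_zero).clm_apply continuous_const)
  have hDgcs : ∀ i j, HasCompactSupport (Dg i j) := fun i j =>
    ((hcs i).fderiv ℝ).comp_left (g := fun T : (Fin 3 → ℝ) →L[ℝ] ℝ => T (Pi.single j 1)) rfl
  -- uniform bound
  obtain ⟨C, hC0, hCg, hCD⟩ : ∃ C : ℝ, 0 ≤ C ∧ (∀ i x, |g x i| ≤ C) ∧
      (∀ i j x, |Dg i j x| ≤ C) := by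
    have h1 : ∀ i : Fin 3, ∃ c : ℝ, ∀ x, |g x i| ≤ c := fun i => by
      obtain ⟨c, hc⟩ := (hGi i).continuous.bounded_above_of_compact_support (hcs i)
      exact ⟨c, fun x => by simpa [Real.norm_eq_abs] using hc x⟩
    have h2' : ∀ i j : Fin 3, ∃ c : ℝ, ∀ x, |Dg i j x| ≤ c := fun i j => by
      obtain ⟨c, hc⟩ := (hDgc i j).bounded_above_of_compact_support (hDgcs i j)
      exact ⟨c, fun x => by simpa [Real.norm_eq_abs] using hc x⟩
    choose Bg hBg using h1
    choose BD hBD using h2'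
    refine ⟨(∑ i, |Bg i|) + ∑ i, ∑ j, |BD i j|, by positivity, ?_, ?_⟩
    · intro i x
      have : |Bg i| ≤ ∑ k, |Bg k| :=
        Finset.single_le_sum (f := fun k => |Bg k|) (fun k _ => abs_nonneg _) (Finset.mem_univ i)
      have h2s : (0:ℝ) ≤ ∑ i, ∑ j, |BD i j| := by positivity
      calc |g x i| ≤ Bg i := hBg i x
        _ ≤ |Bg i| := le_abs_self _
        _ ≤ _ := by linarith
    · intro i j x
      have hin : |BD i j| ≤ ∑ k, |BD i k| :=
        Finset.single_le_sum (f := fun k => |BD i k|) (fun k _ => abs_nonneg _) (Finset.mem_univ j)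
      have hout : ∑ k, |BD i k| ≤ ∑ l, ∑ k, |BD l k| :=
        Finset.single_le_sum (f := fun l => ∑ k, |BD l k|)
          (fun l _ => Finset.sum_nonneg fun k _ => abs_nonneg _) (Finset.mem_univ i)
      have h1s : (0:ℝ) ≤ ∑ i, |Bg i| := by positivity
      calc |Dg i j x| ≤ BD i j := hBD i j x
        _ ≤ |BD i j| := le_abs_self _
        _ ≤ _ := by linarith
  -- mollifiers
  set φ : ℕ → ContDiffBump (0 : Fin 3 → ℝ) :=
    fun n => ⟨((n:ℝ)+1)⁻¹, 2*((n:ℝ)+1)⁻¹, by positivity, by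
      have : (0:ℝ) < ((n:ℝ)+1)⁻¹ := by positivity
      linarith⟩ with hφ
  have hrOut : Tendsto (fun n => (φ n).rOut) atTop (𝓝 0) := by
    have h := tendsto_one_div_add_atTop_nhds_zero_nat (𝕜 := ℝ)
    have h2'' := h.const_mul (2:ℝ)
    simp only [mul_zero] at h2''
    refine h2''.congr fun n => ?_
    simp [hφ, one_div]
  set v : ℕ → Fin 3 → (Fin 3 → ℝ) → ℝ :=
    fun n i => (φ n).normed volume ⋆[lsmul ℝ ℝ, volume] (fun x => g x i) with hvdef
  have hv2 : ∀ n, ∀ i, ContDiff ℝ 2 (v n i) := fun n i =>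
    (φ n).hasCompactSupport_normed.contDiff_convolution_left _ (φ n).contDiff_normed
      ((hGi i).continuous.locallyIntegrable)
  have hvd : ∀ n i j x, dv (v n) i j x
      = ((φ n).normed volume ⋆[lsmul ℝ ℝ, volume] (Dg i j)) x := by
    intro n i j x
    have h := (hcs i).hasFDerivAt_convolution_right (lsmul ℝ ℝ)
      (((φ n).integrable_normed (μ := volume)).locallyIntegrable) (hGi i) x
    show fderiv ℝ (v n i) x (Pi.single j 1) = _
    rw [hvdef]
    rw [h.fderiv]
    exact convolution_precompR_apply _ (((φ n).integrable_normed (μ := volume)).locallyIntegrable)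
      ((hcs i).fderiv ℝ) ((hGi i).continuous_fderiv one_ne_zero) x _
  have hvlim : ∀ i x, Tendsto (fun n => v n i x) atTop (𝓝 (g x i)) := fun i x =>
    ContDiffBump.convolution_tendsto_right_of_continuous hrOut (hGi i).continuous x
  have hdvlim : ∀ i j x, Tendsto (fun n => dv (v n) i j x) atTop (𝓝 (Dg i j x)) := by
    intro i j x
    have := ContDiffBump.convolution_tendsto_right_of_continuous (φ := φ) (μ := volume) hrOut (hDgc i j) x
    exact (tendsto_congr fun n => (hvd n i j x).symm).mp this
  have hconvb : ∀ (h : (Fin 3 → ℝ) → ℝ), Continuous h → (∀ y, |h y| ≤ C) →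
      ∀ n x, |((φ n).normed volume ⋆[lsmul ℝ ℝ, volume] h) x| ≤ 3*C := by
    intro h hc hC n x
    have hd := (φ n).dist_normed_convolution_le (μ := volume) hc.aestronglyMeasurable
      (x₀ := x) (ε := 2*C) (fun y _ => by
        have := hC y; have := hC x
        calc dist (h y) (h x) ≤ |h y| + |h x| := by
              rw [Real.dist_eq]; exact (abs_sub _ _)
          _ ≤ 2*C := by linarith)
    have h2' : |((φ n).normed volume ⋆[lsmul ℝ ℝ, volume] h) x| - |h x| ≤
        dist (((φ n).normed volume ⋆[lsmul ℝ ℝ, volume] h) x) (h x) := by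
      rw [Real.dist_eq]; exact abs_sub_abs_le_abs_sub _ _
    have := hC x
    linarith
  have hvb : ∀ n i x, |v n i x| ≤ 3*C := fun n i x =>
    hconvb _ (hGi i).continuous (fun y => hCg i y) n x
  have hdvb : ∀ n i j x, |dv (v n) i j x| ≤ 3*C := by
    intro n i j x
    rw [hvd n i j x]
    exact hconvb _ (hDgc i j) (fun y => hCD i j y) n x
  have hFdc : ∀ n j, Continuous (Fd (v n) j) := fun n j => (contDiff_Fd (hv2 n) j).continuous
  have hdvcont : ∀ n i j, Continuous (dv (v n) i j) := fun n i j =>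
    (contDiff_dv (hv2 n i) j).continuous
  have hle : (0 : Fin 3 → ℝ) ≤ b := fun i => (hb i).le
  have hcrossint : ∀ n, IntegrableOn
      (fun x => ∑ i, ∑ j, dv (v n) i j x * dv (v n) j i x) (Set.Icc (0:Fin 3 → ℝ) b) :=
    fun n => ((continuous_finset_sum _ fun i _ => continuous_finset_sum _ fun j _ =>
      (hdvcont n i j).mul (hdvcont n j i)).continuousOn).integrableOn_compact isCompact_Icc
  have hdivsqint : ∀ n, IntegrableOn
      (fun x => (∑ i, dv (v n) i i x)^2) (Set.Icc (0:Fin 3 → ℝ) b) :=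
    fun n => (((continuous_finset_sum _ fun i _ => hdvcont n i i).pow 2).continuousOn).integrableOn_compact isCompact_Icc
  set S : ℕ → ℝ := fun n => ∑ i : Fin 3,
    ((∫ x in Set.Icc ((0:Fin 3 → ℝ) ∘ i.succAbove) (b ∘ i.succAbove),
        Fd (v n) i (i.insertNth (b i) x))
      - ∫ x in Set.Icc ((0:Fin 3 → ℝ) ∘ i.succAbove) (b ∘ i.succAbove),
        Fd (v n) i (i.insertNth ((0:Fin 3 → ℝ) i) x)) with hS
  have hdiv : ∀ n, (∫ x in Set.Icc (0:Fin 3 → ℝ) b, ∑ i, ∑ j, dv (v n) i j x * dv (v n) j i x)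
      - (∫ x in Set.Icc (0:Fin 3 → ℝ) b, (∑ i, dv (v n) i i x)^2) = S n := by
    intro n
    have Hc : ∀ j : Fin 3, ContinuousOn (Fd (v n) j) (Set.Icc (0:Fin 3 → ℝ) b) :=
      fun j => (hFdc n j).continuousOn
    have Hd : ∀ x ∈ (Set.pi Set.univ fun i => Set.Ioo ((0:Fin 3 → ℝ) i) (b i)) \ (∅ : Set (Fin 3 → ℝ)),
        ∀ j, HasFDerivAt (Fd (v n) j) (fderiv ℝ (Fd (v n) j) x) x :=
      fun x _ j => (((contDiff_Fd (hv2 n) j).differentiable one_ne_zero) x).hasFDerivAt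
    have heq : (fun x => ∑ j, fderiv ℝ (Fd (v n) j) x (Pi.single j 1))
        = fun x => (∑ i, ∑ j, dv (v n) i j x * dv (v n) j i x) - (∑ i, dv (v n) i i x)^2 :=
      funext fun x => div_Fd (hv2 n) x
    have Hi : IntegrableOn (fun x => ∑ j, fderiv ℝ (Fd (v n) j) x (Pi.single j 1))
        (Set.Icc (0:Fin 3 → ℝ) b) := by
      rw [heq]; exact (hcrossint n).sub (hdivsqint n)
    have H := integral_divergence_of_hasFDerivAt_off_countable' (0:Fin 3 → ℝ) b hle
      (fun j => Fd (v n) j) (fun j x => fderiv ℝ (Fd (v n) j) x) ∅ Set.countable_empty Hc Hd Hi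
    rw [← integral_sub (hcrossint n) (hdivsqint n)]
    rw [show (fun x => (∑ i, ∑ j, dv (v n) i j x * dv (v n) j i x) - (∑ i, dv (v n) i i x)^2)
      = fun x => ∑ j, fderiv ℝ (Fd (v n) j) x (Pi.single j 1) from heq.symm]
    exact H
  set Fg : Fin 3 → (Fin 3 → ℝ) → ℝ :=
    fun j x => ∑ i, (g x i * Dg j i x - g x j * Dg i i x) with hFgdef
  have hFgc : ∀ j, Continuous (Fg j) := by
    intro j
    refine continuous_finset_sum _ fun i _ => Continuous.sub ?_ ?_
    · exact ((hGi i).continuous).mul (hDgc j i)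
    · exact ((hGi j).continuous).mul (hDgc i i)
  have hFdb : ∀ n j y, |Fd (v n) j y| ≤ 54*C^2 := by
    intro n j y
    unfold Fd
    calc |∑ i, (v n i y * dv (v n) j i y - v n j y * dv (v n) i i y)|
        ≤ ∑ i, |v n i y * dv (v n) j i y - v n j y * dv (v n) i i y| :=
          Finset.abs_sum_le_sum_abs _ _
      _ ≤ ∑ _i : Fin 3, 18*C^2 := by
          refine Finset.sum_le_sum fun i _ => ?_
          have h1 := abs_sub (v n i y * dv (v n) j i y) (v n j y * dv (v n) i i y)
          rw [abs_mul, abs_mul] at h1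
          have b1 := hvb n i y; have b2 := hdvb n j i y
          have b3 := hvb n j y; have b4 := hdvb n i i y
          have n1 := abs_nonneg (v n i y); have n2 := abs_nonneg (dv (v n) j i y)
          have n3 := abs_nonneg (v n j y); have n4 := abs_nonneg (dv (v n) i i y)
          nlinarith
      _ = 54*C^2 := by simp [Finset.sum_const]; ring
  have hFdlim : ∀ j y, Tendsto (fun n => Fd (v n) j y) atTop (𝓝 (Fg j y)) := by
    intro j y
    unfold Fd
    rw [hFgdef]
    exact tendsto_finset_sum _ fun i _ =>
      ((hvlim i y).mul (hdvlim j i y)).sub ((hvlim j y).mul (hdvlim i i y))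
  have hface : ∀ (i : Fin 3) (c : ℝ),
      Tendsto (fun n => ∫ x in Set.Icc ((0:Fin 3 → ℝ) ∘ i.succAbove) (b ∘ i.succAbove),
          Fd (v n) i (i.insertNth c x)) atTop
        (𝓝 (∫ x in Set.Icc ((0:Fin 3 → ℝ) ∘ i.succAbove) (b ∘ i.succAbove),
          Fg i (i.insertNth c x))) := by
    intro i c
    have hins : Continuous (fun x : Fin 2 → ℝ => Fin.insertNth (α := fun _ : Fin 3 => ℝ) i c x) :=
      Continuous.finInsertNth (A := fun _ : Fin 3 => ℝ) i
        (f := fun _ : Fin 2 → ℝ => c) continuous_const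
        (g := fun x : Fin 2 → ℝ => x) continuous_id
    refine tendsto_integral_of_dominated_convergence (fun _ => 54*C^2) ?_ ?_ ?_ ?_
    · exact fun n => ((hFdc n i).comp hins).aestronglyMeasurable.restrict
    · exact integrableOn_const isCompact_Icc.measure_lt_top.ne
    · exact fun n => Filter.Eventually.of_forall fun x => by
        simpa [Real.norm_eq_abs] using hFdb n i (i.insertNth c x)
    · exact Filter.Eventually.of_forall fun x => hFdlim i (i.insertNth c x)
  have hSlim : Tendsto S atTop (𝓝 (∑ i : Fin 3,
      ((∫ x in Set.Icc ((0:Fin 3 → ℝ) ∘ i.succAbove) (b ∘ i.succAbove),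
          Fg i (i.insertNth (b i) x))
        - ∫ x in Set.Icc ((0:Fin 3 → ℝ) ∘ i.succAbove) (b ∘ i.succAbove),
          Fg i (i.insertNth ((0:Fin 3 → ℝ) i) x)))) := by
    rw [hS]
    exact tendsto_finset_sum _ fun i _ => (hface i (b i)).sub (hface i ((0:Fin 3 → ℝ) i))
  have hfacezero : ∀ (i : Fin 3) (c : ℝ), 0 ≤ c → c ≤ b i →
      (∀ p ∈ Set.Icc (0:Fin 3 → ℝ) b, p i = c → g p = 0) →
      (∫ x in Set.Icc ((0:Fin 3 → ℝ) ∘ i.succAbove) (b ∘ i.succAbove),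
        Fg i (i.insertNth c x)) = 0 := by
    intro i c hc0 hcb hvan
    rw [setIntegral_congr_fun measurableSet_Icc (g := fun _ => (0:ℝ))]
    · simp
    · intro x hx
      have hmem : i.insertNth c x ∈ Set.Icc (0:Fin 3 → ℝ) b := by
        rw [Fin.insertNth_mem_Icc]
        exact ⟨⟨hc0, hcb⟩, hx⟩
      have hp0 : g (i.insertNth c x) = 0 :=
        hvan _ hmem (Fin.insertNth_apply_same (α := fun _ : Fin 3 => ℝ) i c x)
      simp [hFgdef, hp0]
  have h20 : (2:Fin 3).succAbove 0 = 0 := by decide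
  have h21 : (2:Fin 3).succAbove 1 = 1 := by decide
  have hbotzero :
      (∫ x in Set.Icc ((0:Fin 3 → ℝ) ∘ (2:Fin 3).succAbove) (b ∘ (2:Fin 3).succAbove),
        Fg 2 ((2:Fin 3).insertNth ((0:Fin 3 → ℝ) 2) x)) = 0 := by
    rw [← setIntegral_congr_set (pi_Ioo_ae_eq_Icc ((0:Fin 3 → ℝ) ∘ (2:Fin 3).succAbove)
      (b ∘ (2:Fin 3).succAbove))]
    rw [setIntegral_congr_fun (MeasurableSet.univ_pi fun _ => measurableSet_Ioo)
      (g := fun _ => (0:ℝ))]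
    · simp
    · intro x hx
      simp only [Set.mem_pi, Set.mem_univ, forall_true_left, Set.mem_Ioo] at hx
      have hx0 : 0 < x 0 ∧ x 0 < b 0 := by simpa [Function.comp, h20] using hx 0
      have hx1 : 0 < x 1 ∧ x 1 < b 1 := by simpa [Function.comp, h21] using hx 1
      set p := Fin.insertNth (α := fun _ : Fin 3 => ℝ) (2:Fin 3) ((0:Fin 3 → ℝ) 2) x with hp
      have hp2 : p 2 = 0 :=
        Fin.insertNth_apply_same (α := fun _ : Fin 3 => ℝ) (2:Fin 3) _ x
      have hp0 : p 0 = x 0 := by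
        have := Fin.insertNth_apply_succAbove (α := fun _ : Fin 3 => ℝ) (2:Fin 3)
          ((0:Fin 3 → ℝ) 2) x 0
        rwa [h20] at this
      have hp1 : p 1 = x 1 := by
        have := Fin.insertNth_apply_succAbove (α := fun _ : Fin 3 => ℝ) (2:Fin 3)
          ((0:Fin 3 → ℝ) 2) x 1
        rwa [h21] at this
      have hpmem : p ∈ Set.Icc (0:Fin 3 → ℝ) b := by
        rw [hp, Fin.insertNth_mem_Icc]
        exact ⟨⟨le_rfl, (hb 2).le⟩, ⟨fun j => (hx j).1.le, fun j => (hx j).2.le⟩⟩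
      have hg0 : g p 0 = 0 := (h2 p hpmem hp2).1
      have hg1 : g p 1 = 0 := (h2 p hpmem hp2).2
      have hDg00 : Dg 0 0 p = 0 := by
        show fderiv ℝ (fun y => g y 0) p (Pi.single 0 1) = 0
        apply fderiv_single_eq_zero (((hGi 0).differentiable one_ne_zero) p)
        rw [Metric.eventually_nhds_iff]
        refine ⟨min (x 0) (b 0 - x 0), by
          rcases hx0 with ⟨u1, u2⟩; apply lt_min <;> linarith, fun t ht => ?_⟩
        rw [Real.dist_eq, sub_zero] at ht
        have ht1 := abs_lt.mp (ht.trans_le (min_le_left _ _))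
        have ht2 := abs_lt.mp (ht.trans_le (min_le_right _ _))
        have hq0 : (p + t • (Pi.single 0 1 : Fin 3 → ℝ)) 0 = x 0 + t := by
          simp [hp0, Pi.single_eq_same]
        have hq1 : (p + t • (Pi.single 0 1 : Fin 3 → ℝ)) 1 = x 1 := by
          simp [hp1, Pi.single_eq_of_ne (show (1:Fin 3) ≠ 0 by decide)]
        have hq2 : (p + t • (Pi.single 0 1 : Fin 3 → ℝ)) 2 = 0 := by
          simp [hp2, Pi.single_eq_of_ne (show (2:Fin 3) ≠ 0 by decide)]
        have hqmem : p + t • (Pi.single 0 1 : Fin 3 → ℝ) ∈ Set.Icc (0:Fin 3 → ℝ) b := by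
          refine Set.mem_Icc.mpr ⟨fun k => ?_, fun k => ?_⟩ <;> fin_cases k
          · show (0:ℝ) ≤ (p + t • (Pi.single 0 1 : Fin 3 → ℝ)) 0
            rw [hq0]; rcases hx0 with ⟨u1, _⟩; rcases ht1 with ⟨w1, _⟩; linarith
          · show (0:ℝ) ≤ (p + t • (Pi.single 0 1 : Fin 3 → ℝ)) 1
            rw [hq1]; exact hx1.1.le
          · show (0:ℝ) ≤ (p + t • (Pi.single 0 1 : Fin 3 → ℝ)) 2
            rw [hq2]
          · show (p + t • (Pi.single 0 1 : Fin 3 → ℝ)) 0 ≤ b 0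
            rw [hq0]; rcases hx0 with ⟨_, u2⟩; rcases ht2 with ⟨_, w2⟩; linarith
          · show (p + t • (Pi.single 0 1 : Fin 3 → ℝ)) 1 ≤ b 1
            rw [hq1]; exact hx1.2.le
          · show (p + t • (Pi.single 0 1 : Fin 3 → ℝ)) 2 ≤ b 2
            rw [hq2]; exact (hb 2).le
        exact (h2 _ hqmem hq2).1
      have hDg11 : Dg 1 1 p = 0 := by
        show fderiv ℝ (fun y => g y 1) p (Pi.single 1 1) = 0
        apply fderiv_single_eq_zero (((hGi 1).differentiable one_ne_zero) p)
        rw [Metric.eventually_nhds_iff]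
        refine ⟨min (x 1) (b 1 - x 1), by
          rcases hx1 with ⟨u1, u2⟩; apply lt_min <;> linarith, fun t ht => ?_⟩
        rw [Real.dist_eq, sub_zero] at ht
        have ht1 := abs_lt.mp (ht.trans_le (min_le_left _ _))
        have ht2 := abs_lt.mp (ht.trans_le (min_le_right _ _))
        have hq0 : (p + t • (Pi.single 1 1 : Fin 3 → ℝ)) 0 = x 0 := by
          simp [hp0, Pi.single_eq_of_ne (show (0:Fin 3) ≠ 1 by decide)]
        have hq1 : (p + t • (Pi.single 1 1 : Fin 3 → ℝ)) 1 = x 1 + t := by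
          simp [hp1, Pi.single_eq_same]
        have hq2 : (p + t • (Pi.single 1 1 : Fin 3 → ℝ)) 2 = 0 := by
          simp [hp2, Pi.single_eq_of_ne (show (2:Fin 3) ≠ 1 by decide)]
        have hqmem : p + t • (Pi.single 1 1 : Fin 3 → ℝ) ∈ Set.Icc (0:Fin 3 → ℝ) b := by
          refine Set.mem_Icc.mpr ⟨fun k => ?_, fun k => ?_⟩ <;> fin_cases k
          · show (0:ℝ) ≤ (p + t • (Pi.single 1 1 : Fin 3 → ℝ)) 0
            rw [hq0]; exact hx0.1.le
          · show (0:ℝ) ≤ (p + t • (Pi.single 1 1 : Fin 3 → ℝ)) 1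
            rw [hq1]; rcases hx1 with ⟨u1, _⟩; rcases ht1 with ⟨w1, _⟩; linarith
          · show (0:ℝ) ≤ (p + t • (Pi.single 1 1 : Fin 3 → ℝ)) 2
            rw [hq2]
          · show (p + t • (Pi.single 1 1 : Fin 3 → ℝ)) 0 ≤ b 0
            rw [hq0]; exact hx0.2.le
          · show (p + t • (Pi.single 1 1 : Fin 3 → ℝ)) 1 ≤ b 1
            rw [hq1]; rcases hx1 with ⟨_, u2⟩; rcases ht2 with ⟨_, w2⟩; linarith
          · show (p + t • (Pi.single 1 1 : Fin 3 → ℝ)) 2 ≤ b 2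
            rw [hq2]; exact (hb 2).le
        exact (h2 _ hqmem hq2).2
      show Fg 2 p = 0
      rw [hFgdef]
      simp only [Fin.sum_univ_three]
      rw [hg0, hg1, hDg00, hDg11]
      ring
  have hZ : (∑ i : Fin 3,
      ((∫ x in Set.Icc ((0:Fin 3 → ℝ) ∘ i.succAbove) (b ∘ i.succAbove),
          Fg i (i.insertNth (b i) x))
        - ∫ x in Set.Icc ((0:Fin 3 → ℝ) ∘ i.succAbove) (b ∘ i.succAbove),
          Fg i (i.insertNth ((0:Fin 3 → ℝ) i) x))) = 0 := by
    rw [Fin.sum_univ_three]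
    have t0 := hfacezero 0 (b 0) (hb 0).le le_rfl
      (fun p hp hc => h0 p hp (Or.inr (Or.inl hc)))
    have z0 := hfacezero 0 ((0:Fin 3 → ℝ) 0) le_rfl (hb 0).le
      (fun p hp hc => h0 p hp (Or.inl hc))
    have t1 := hfacezero 1 (b 1) (hb 1).le le_rfl
      (fun p hp hc => h0 p hp (Or.inr (Or.inr (Or.inr (Or.inl hc)))))
    have z1 := hfacezero 1 ((0:Fin 3 → ℝ) 1) le_rfl (hb 1).le
      (fun p hp hc => h0 p hp (Or.inr (Or.inr (Or.inl hc))))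
    have t2 := hfacezero 2 (b 2) (hb 2).le le_rfl
      (fun p hp hc => h0 p hp (Or.inr (Or.inr (Or.inr (Or.inr hc)))))
    rw [t0, z0, t1, z1, t2, hbotzero]
    ring
  have hS0 : Tendsto S atTop (𝓝 0) := hZ ▸ hSlim
  have hineq : ∀ n, S n ≤ ∫ x in Set.Icc (0:Fin 3 → ℝ) b,
      ∑ i, ∑ j, dv (v n) i j x * dv (v n) j i x := by
    intro n
    have hnn : 0 ≤ ∫ x in Set.Icc (0:Fin 3 → ℝ) b, (∑ i, dv (v n) i i x)^2 :=
      setIntegral_nonneg measurableSet_Icc fun x _ => sq_nonneg _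
    have := hdiv n
    linarith
  have hcrosslim : Tendsto (fun n => ∫ x in Set.Icc (0:Fin 3 → ℝ) b,
      ∑ i, ∑ j, dv (v n) i j x * dv (v n) j i x) atTop
      (𝓝 (∫ x in Set.Icc (0:Fin 3 → ℝ) b, ∑ i, ∑ j, Dg i j x * Dg j i x)) := by
    refine tendsto_integral_of_dominated_convergence (fun _ => 81*C^2) ?_ ?_ ?_ ?_
    · exact fun n => (continuous_finset_sum _ fun i _ => continuous_finset_sum _ fun j _ =>
        (hdvcont n i j).mul (hdvcont n j i)).aestronglyMeasurable.restrict
    · exact integrableOn_const isCompact_Icc.measure_lt_top.ne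
    · intro n
      refine Filter.Eventually.of_forall fun x => ?_
      rw [Real.norm_eq_abs]
      calc |∑ i, ∑ j, dv (v n) i j x * dv (v n) j i x|
          ≤ ∑ i, |∑ j, dv (v n) i j x * dv (v n) j i x| := Finset.abs_sum_le_sum_abs _ _
        _ ≤ ∑ _i : Fin 3, (27*C^2) := by
            refine Finset.sum_le_sum fun i _ => ?_
            calc |∑ j, dv (v n) i j x * dv (v n) j i x|
                ≤ ∑ j, |dv (v n) i j x * dv (v n) j i x| := Finset.abs_sum_le_sum_abs _ _
              _ ≤ ∑ _j : Fin 3, (9*C^2) := by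
                  refine Finset.sum_le_sum fun j _ => ?_
                  rw [abs_mul]
                  have b1 := hdvb n i j x; have b2 := hdvb n j i x
                  have n1 := abs_nonneg (dv (v n) i j x)
                  have n2 := abs_nonneg (dv (v n) j i x)
                  nlinarith
              _ = 27*C^2 := by simp [Finset.sum_const]; ring
        _ = 81*C^2 := by simp [Finset.sum_const]; ring
    · exact Filter.Eventually.of_forall fun x => tendsto_finset_sum _ fun i _ =>
        tendsto_finset_sum _ fun j _ => (hdvlim i j x).mul (hdvlim j i x)
  exact le_of_tendsto_of_tendsto' hS0 hcrosslim hineq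

set_option maxHeartbeats 2000000 in
/-- Korn inequality on the box Ω_b = (0,L)² × (0,R) for vector fields vanishing on the
lateral boundaries and the top boundary, with vanishing tangential components on the bottom. -/
theorem stmt_0 (L R : ℝ) (hL : 0 < L) (hR : 0 < R)
    (η : (Fin 3 → ℝ) → (Fin 3 → ℝ)) (hη : ContDiff ℝ 1 η)
    (hbc : ∀ p : Fin 3 → ℝ, p 0 ∈ Set.Icc 0 L → p 1 ∈ Set.Icc 0 L → p 2 ∈ Set.Icc 0 R →
      (p 0 = 0 ∨ p 0 = L ∨ p 1 = 0 ∨ p 1 = L ∨ p 2 = R) → η p = 0)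
    (hbot : ∀ p : Fin 3 → ℝ, p 0 ∈ Set.Icc 0 L → p 1 ∈ Set.Icc 0 L → p 2 = 0 →
      η p 0 = 0 ∧ η p 1 = 0) :
    (∫ p in {q : Fin 3 → ℝ | q 0 ∈ Set.Ioo 0 L ∧ q 1 ∈ Set.Ioo 0 L ∧ q 2 ∈ Set.Ioo 0 R},
        ∑ i : Fin 3, ∑ j : Fin 3,
          ((fderiv ℝ (fun x => η x i) p (Pi.single j 1)
            + fderiv ℝ (fun x => η x j) p (Pi.single i 1)) / 2) ^ 2)
      ≥ (1 / 2) *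
        ∫ p in {q : Fin 3 → ℝ | q 0 ∈ Set.Ioo 0 L ∧ q 1 ∈ Set.Ioo 0 L ∧ q 2 ∈ Set.Ioo 0 R},
          ∑ i : Fin 3, ∑ j : Fin 3, (fderiv ℝ (fun x => η x i) p (Pi.single j 1)) ^ 2 := by
  set b : Fin 3 → ℝ := ![L, L, R] with hbdef
  have hb0 : b 0 = L := rfl
  have hb1 : b 1 = L := rfl
  have hb2 : b 2 = R := rfl
  have hb : ∀ i, 0 < b i := by
    intro i; fin_cases i
    · exact hL
    · exact hL
    · exact hR
  -- cutoff
  set r : ℝ := |L| + |R| + 1 with hrdef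
  have hr1 : (0:ℝ) < r := by positivity
  set ψ : ContDiffBump (0 : Fin 3 → ℝ) := ⟨r, r+1, hr1, by linarith⟩ with hψdef
  set g : (Fin 3 → ℝ) → (Fin 3 → ℝ) := fun x => ψ x • η x with hgdef
  have hgc : ContDiff ℝ 1 g := (ψ.contDiff).smul hη
  have hψcs : HasCompactSupport (ψ : (Fin 3 → ℝ) → ℝ) := ψ.hasCompactSupport
  have hcs : ∀ i, HasCompactSupport (fun x => g x i) := by
    intro i
    exact hψcs.mul_right (f' := fun x => η x i)
  have hble : ∀ k : Fin 3, b k ≤ |L| + |R| := by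
    intro k; fin_cases k
    · show L ≤ |L| + |R|
      have := le_abs_self L; have := abs_nonneg R; linarith
    · show L ≤ |L| + |R|
      have := le_abs_self L; have := abs_nonneg R; linarith
    · show R ≤ |L| + |R|
      have := le_abs_self R; have := abs_nonneg L; linarith
  have hboxnorm : ∀ q ∈ Set.Icc (0:Fin 3 → ℝ) b, ‖q‖ ≤ |L| + |R| := by
    intro q hq
    rw [pi_norm_le_iff_of_nonneg (by positivity)]
    intro i
    rw [Real.norm_eq_abs]
    have h0i : (0:ℝ) ≤ q i := hq.1 i
    rw [abs_of_nonneg h0i]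
    exact le_trans (hq.2 i) (hble i)
  have hball : ∀ q ∈ Set.Icc (0:Fin 3 → ℝ) b, q ∈ Metric.ball (0 : Fin 3 → ℝ) r := by
    intro q hq
    rw [mem_ball_zero_iff]
    have := hboxnorm q hq
    rw [hrdef]; linarith
  have hgeq : ∀ q ∈ Metric.ball (0 : Fin 3 → ℝ) r, g q = η q := by
    intro q hq
    have h1 : ψ q = 1 := ψ.one_of_mem_closedBall (Metric.ball_subset_closedBall hq)
    rw [hgdef]; simp [h1]
  have hfd : ∀ x ∈ Set.Icc (0:Fin 3 → ℝ) b, ∀ i : Fin 3,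
      fderiv ℝ (fun y => η y i) x = fderiv ℝ (fun y => g y i) x := by
    intro x hx i
    refine (Filter.EventuallyEq.fderiv_eq ?_).symm
    filter_upwards [isOpen_ball.mem_nhds (hball x hx)] with y hy
    rw [hgeq y hy]
  -- boundary conditions for g
  have hmemIcc : ∀ p : Fin 3 → ℝ, p ∈ Set.Icc (0:Fin 3 → ℝ) b →
      p 0 ∈ Set.Icc 0 L ∧ p 1 ∈ Set.Icc 0 L ∧ p 2 ∈ Set.Icc 0 R := by
    intro p hp
    refine ⟨⟨hp.1 0, ?_⟩, ⟨hp.1 1, ?_⟩, ⟨hp.1 2, ?_⟩⟩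
    · have := hp.2 0; rwa [hb0] at this
    · have := hp.2 1; rwa [hb1] at this
    · have := hp.2 2; rwa [hb2] at this
  have h0' : ∀ p ∈ Set.Icc (0:Fin 3 → ℝ) b,
      (p 0 = 0 ∨ p 0 = b 0 ∨ p 1 = 0 ∨ p 1 = b 1 ∨ p 2 = b 2) → g p = 0 := by
    intro p hp hdisj
    obtain ⟨m0, m1, m2⟩ := hmemIcc p hp
    have : η p = 0 := by
      apply hbc p m0 m1 m2
      rw [hb0, hb1, hb2] at hdisj
      exact hdisj
    rw [hgdef]; simp [this]
  have h2' : ∀ p ∈ Set.Icc (0:Fin 3 → ℝ) b, p 2 = 0 → g p 0 = 0 ∧ g p 1 = 0 := by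
    intro p hp hz
    obtain ⟨m0, m1, m2⟩ := hmemIcc p hp
    obtain ⟨e0, e1⟩ := hbot p m0 m1 hz
    constructor
    · show (ψ p • η p) 0 = 0
      simp [e0]
    · show (ψ p • η p) 1 = 0
      simp [e1]
  have key := cross_nonneg b hb g hgc hcs h0' h2'
  -- region rewriting
  have hreg : {q : Fin 3 → ℝ | q 0 ∈ Set.Ioo 0 L ∧ q 1 ∈ Set.Ioo 0 L ∧ q 2 ∈ Set.Ioo 0 R}
      = Set.pi Set.univ fun i => Set.Ioo ((0:Fin 3 → ℝ) i) (b i) := by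
    ext q
    simp only [Set.mem_setOf_eq, Set.mem_pi, Set.mem_univ, forall_true_left]
    constructor
    · rintro ⟨a0, a1, a2⟩ i
      fin_cases i
      · simpa [hb0] using a0
      · simpa [hb1] using a1
      · simpa [hb2] using a2
    · intro h
      refine ⟨?_, ?_, ?_⟩
      · simpa [hb0] using h 0
      · simpa [hb1] using h 1
      · simpa [hb2] using h 2
  rw [hreg]
  rw [setIntegral_congr_set (pi_Ioo_ae_eq_Icc 0 b), setIntegral_congr_set (pi_Ioo_ae_eq_Icc 0 b)]
  -- switch integrand from η to g
  have e1 : (∫ p in Set.Icc (0:Fin 3 → ℝ) b, ∑ i : Fin 3, ∑ j : Fin 3,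
        ((fderiv ℝ (fun x => η x i) p (Pi.single j 1)
          + fderiv ℝ (fun x => η x j) p (Pi.single i 1)) / 2) ^ 2)
      = ∫ p in Set.Icc (0:Fin 3 → ℝ) b, ∑ i : Fin 3, ∑ j : Fin 3,
        ((fderiv ℝ (fun x => g x i) p (Pi.single j 1)
          + fderiv ℝ (fun x => g x j) p (Pi.single i 1)) / 2) ^ 2 :=
    setIntegral_congr_fun measurableSet_Icc (fun p hp => by simp only [hfd p hp])
  have e2 : (∫ p in Set.Icc (0:Fin 3 → ℝ) b, ∑ i : Fin 3, ∑ j : Fin 3,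
        (fderiv ℝ (fun x => η x i) p (Pi.single j 1)) ^ 2)
      = ∫ p in Set.Icc (0:Fin 3 → ℝ) b, ∑ i : Fin 3, ∑ j : Fin 3,
        (fderiv ℝ (fun x => g x i) p (Pi.single j 1)) ^ 2 :=
    setIntegral_congr_fun measurableSet_Icc (fun p hp => by simp only [hfd p hp])
  rw [e1, e2]
  -- algebra
  have hgic : ∀ i : Fin 3, ContDiff ℝ 1 (fun x => g x i) :=
    fun i => (ContinuousLinearMap.proj (R := ℝ) (φ := fun _ : Fin 3 => ℝ) i).contDiff.comp hgc
  have hDc : ∀ i j : Fin 3, Continuous (fun x => fderiv ℝ (fun y => g y i) x (Pi.single j 1)) :=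
    fun i j => ((hgic i).continuous_fderiv one_ne_zero).clm_apply continuous_const
  have hint1 : IntegrableOn (fun x => ∑ i : Fin 3, ∑ j : Fin 3,
      (fderiv ℝ (fun y => g y i) x (Pi.single j 1)) ^ 2) (Set.Icc (0:Fin 3 → ℝ) b) :=
    ((continuous_finset_sum _ fun i _ => continuous_finset_sum _ fun j _ =>
      (hDc i j).pow 2).continuousOn).integrableOn_compact isCompact_Icc
  have hint2 : IntegrableOn (fun x => ∑ i : Fin 3, ∑ j : Fin 3,
      fderiv ℝ (fun y => g y i) x (Pi.single j 1) * fderiv ℝ (fun y => g y j) x (Pi.single i 1))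
      (Set.Icc (0:Fin 3 → ℝ) b) :=
    ((continuous_finset_sum _ fun i _ => continuous_finset_sum _ fun j _ =>
      (hDc i j).mul (hDc j i)).continuousOn).integrableOn_compact isCompact_Icc
  have hpt : ∀ p : Fin 3 → ℝ, (∑ i : Fin 3, ∑ j : Fin 3,
        ((fderiv ℝ (fun x => g x i) p (Pi.single j 1)
          + fderiv ℝ (fun x => g x j) p (Pi.single i 1)) / 2) ^ 2)
      = (1/2) * (∑ i : Fin 3, ∑ j : Fin 3, (fderiv ℝ (fun x => g x i) p (Pi.single j 1)) ^ 2)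
        + (1/2) * (∑ i : Fin 3, ∑ j : Fin 3, fderiv ℝ (fun x => g x i) p (Pi.single j 1)
            * fderiv ℝ (fun x => g x j) p (Pi.single i 1)) := by
    intro p
    simp only [Fin.sum_univ_three]
    ring
  have e3 : (∫ p in Set.Icc (0:Fin 3 → ℝ) b, ∑ i : Fin 3, ∑ j : Fin 3,
        ((fderiv ℝ (fun x => g x i) p (Pi.single j 1)
          + fderiv ℝ (fun x => g x j) p (Pi.single i 1)) / 2) ^ 2)
      = (1/2) * (∫ p in Set.Icc (0:Fin 3 → ℝ) b, ∑ i : Fin 3, ∑ j : Fin 3,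
          (fderiv ℝ (fun x => g x i) p (Pi.single j 1)) ^ 2)
        + (1/2) * (∫ p in Set.Icc (0:Fin 3 → ℝ) b, ∑ i : Fin 3, ∑ j : Fin 3,
          fderiv ℝ (fun x => g x i) p (Pi.single j 1)
            * fderiv ℝ (fun x => g x j) p (Pi.single i 1)) := by
    rw [setIntegral_congr_fun measurableSet_Icc (g := fun p =>
      (1/2) * (∑ i : Fin 3, ∑ j : Fin 3, (fderiv ℝ (fun x => g x i) p (Pi.single j 1)) ^ 2)
        + (1/2) * (∑ i : Fin 3, ∑ j : Fin 3, fderiv ℝ (fun x => g x i) p (Pi.single j 1)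
            * fderiv ℝ (fun x => g x j) p (Pi.single i 1))) (fun p _ => hpt p)]
    rw [integral_add (hint1.const_mul _) (hint2.const_mul _)]
    rw [integral_const_mul, integral_const_mul]
  rw [e3]
  have hcross : 0 ≤ ∫ p in Set.Icc (0:Fin 3 → ℝ) b, ∑ i : Fin 3, ∑ j : Fin 3,
      fderiv ℝ (fun x => g x i) p (Pi.single j 1)
        * fderiv ℝ (fun x => g x j) p (Pi.single i 1) := key
  rw [ge_iff_le]
  linarith
end

section
/- Let H and V be Hilbert spaces with V compactly embedded in H, and let (u_N) ⊂ L²(0,T;H) be piecewise constant in time on intervals of length Δt = T/N. If ‖u_N‖_{L¹(Δt,T;X')} of the discrete difference quotients (τ_{Δt}u_N − u_N)/Δt is uniformly bounded for a Banach space X with H ⊂ X' (continuously), and ‖u_N‖_{L^∞(0,T; H)} ≤ C uniformly, and H embeds compactly into a Banach space Y with Y ⊂ X', then (u_N) is relatively compact in L²(0,T;Y). -/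
open MeasureTheory Set Filter

set_option linter.unusedSectionVars false
set_option linter.unusedVariables false


noncomputable def DJind (Δ t : ℝ) : ℕ := (⌈t / Δ⌉ - 1).toNat

lemma DJind_spec {Δ t : ℝ} (hΔ : 0 < Δ) (ht : 0 < t) :
    t ∈ Set.Ioc ((DJind Δ t : ℝ) * Δ) ((DJind Δ t + 1 : ℝ) * Δ) := by
  have hpos : (0:ℤ) < ⌈t / Δ⌉ := Int.ceil_pos.mpr (div_pos ht hΔ)
  have h2 : ((DJind Δ t : ℕ) : ℤ) = ⌈t / Δ⌉ - 1 := Int.toNat_of_nonneg (by omega)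
  have h2' : ((DJind Δ t : ℕ) : ℝ) = (⌈t / Δ⌉ : ℝ) - 1 := by
    exact_mod_cast congrArg (Int.cast : ℤ → ℝ) h2
  constructor
  · rw [h2', ← lt_div_iff₀ hΔ]
    have := Int.ceil_lt_add_one (t / Δ)
    linarith
  · rw [h2', ← div_le_iff₀ hΔ]
    have := Int.le_ceil (t / Δ)
    linarith

lemma DJind_eq {Δ t : ℝ} (hΔ : 0 < Δ) (n : ℕ)
    (h : t ∈ Set.Ioc ((n : ℝ) * Δ) ((n + 1 : ℝ) * Δ)) : DJind Δ t = n := by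
  obtain ⟨h1, h2⟩ := h
  have hc : ⌈t / Δ⌉ = (n : ℤ) + 1 := by
    apply le_antisymm
    · apply Int.ceil_le.mpr
      rw [div_le_iff₀ hΔ]; push_cast; linarith
    · apply Int.lt_ceil.mpr
      rw [lt_div_iff₀ hΔ]; push_cast; linarith
  simp [DJind, hc]

lemma DJind_mono {Δ : ℝ} (hΔ : 0 < Δ) {t s : ℝ} (h : t ≤ s) : DJind Δ t ≤ DJind Δ s := by
  have : ⌈t / Δ⌉ ≤ ⌈s / Δ⌉ := Int.ceil_le_ceil (by
    gcongr)
  unfold DJind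
  omega

lemma DJind_lt {Δ : ℝ} (hΔ : 0 < Δ) {t : ℝ} {N : ℕ} (hN : 0 < N) (ht : t ≤ N * Δ) :
    DJind Δ t < N := by
  have : ⌈t / Δ⌉ ≤ (N : ℤ) := Int.ceil_le.mpr (by rw [div_le_iff₀ hΔ]; exact_mod_cast ht)
  unfold DJind
  omega


lemma DJylim {Y W : Type*} [NormedAddCommGroup Y] [NormedSpace ℝ Y]
    [NormedAddCommGroup W] [NormedSpace ℝ W]
    {KY : Set Y} (hKY : IsCompact KY) (m : Y →L[ℝ] W) (hminj : Function.Injective m)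
    {y : ℕ → Y} (hy : ∀ n, y n ∈ KY) {z : W}
    (hz : Filter.Tendsto (fun n => m (y n)) Filter.atTop (nhds z)) :
    ∃ ylim, Filter.Tendsto y Filter.atTop (nhds ylim) := by
  have hzmem : z ∈ m '' KY :=
    (hKY.image m.continuous).isClosed.mem_of_tendsto hz
      (Filter.Eventually.of_forall fun n => Set.mem_image_of_mem _ (hy n))
  obtain ⟨ylim, hylimKY, hylimz⟩ := hzmem
  refine ⟨ylim, tendsto_of_subseq_tendsto fun ns hns => ?_⟩
  obtain ⟨y', hy'KY, ms, hmsmono, hms⟩ := hKY.tendsto_subseq (fun n => hy (ns n))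
  refine ⟨ms, ?_⟩
  have h1 : Filter.Tendsto (fun n => m (y (ns (ms n)))) Filter.atTop (nhds (m y')) :=
    (m.continuous.tendsto y').comp hms
  have h2 : Filter.Tendsto (fun n => m (y (ns (ms n)))) Filter.atTop (nhds z) :=
    hz.comp (hns.comp hmsmono.tendsto_atTop)
  have : y' = ylim := hminj (by rw [hylimz]; exact tendsto_nhds_unique h1 h2)
  rwa [this] at hms

section
variable {H W : Type*} [NormedAddCommGroup H] [NormedSpace ℝ H]
  [NormedAddCommGroup W] [NormedSpace ℝ W]
variable (j : H →L[ℝ] W) (u : ℝ → H) (Δ : ℝ)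


noncomputable def DJav (n : ℕ) : H := u ((n + 1 : ℝ) * Δ)
noncomputable def DJd (n : ℕ) : ℝ := ‖j (DJav u Δ n) - j (DJav u Δ (n - 1))‖
def DJstep : Prop := ∀ (n : ℕ) (t s : ℝ),
    t ∈ Set.Ioc ((n : ℝ) * Δ) ((n + 1 : ℝ) * Δ) →
    s ∈ Set.Ioc ((n : ℝ) * Δ) ((n + 1 : ℝ) * Δ) → u t = u s

noncomputable def DJV (t : ℝ) : ℝ := ∑ i ∈ Finset.Ioc 0 (DJind Δ t), DJd j u Δ i

lemma DJav_mem {Δ : ℝ} (n : ℕ) (hΔ : 0 < Δ) :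
    (n + 1 : ℝ) * Δ ∈ Set.Ioc ((n : ℝ) * Δ) ((n + 1 : ℝ) * Δ) :=
  ⟨by nlinarith [Nat.cast_nonneg (α := ℝ) n], le_rfl⟩


variable {u Δ}

lemma DJunion {Δ : ℝ} (hΔ : 0 < Δ) (M : ℕ) :
    ⋃ i ∈ Finset.Ioc 0 M, Set.Ioc ((i : ℝ) * Δ) ((i + 1 : ℝ) * Δ)
      = Set.Ioc Δ ((M + 1 : ℝ) * Δ) := by
  induction M with
  | zero => simp
  | succ M ih =>
    have hins : Finset.Ioc 0 (M + 1) = insert (M + 1) (Finset.Ioc 0 M) := by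
      ext x; simp [Finset.mem_Ioc]; omega
    rw [hins, Finset.set_biUnion_insert, ih, Set.union_comm]
    push_cast
    exact Set.Ioc_union_Ioc_eq_Ioc (by nlinarith [Nat.cast_nonneg (α := ℝ) M])
      (by nlinarith [Nat.cast_nonneg (α := ℝ) M])

lemma DJsum_eq_int (hΔ : 0 < Δ) (hst : DJstep u Δ) {N : ℕ} (hN : 0 < N) :
    ∑ i ∈ Finset.Ioc 0 (N - 1), DJd j u Δ i
      = ∫ t in Set.Ioc Δ ((N : ℝ) * Δ), ‖j (u (t - Δ)) - j (u t)‖ / Δ := by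
  obtain ⟨M, rfl⟩ : ∃ M, N = M + 1 := ⟨N - 1, by omega⟩
  have hMcast : ((M + 1 : ℕ) : ℝ) = (M : ℝ) + 1 := by push_cast; ring
  set S : ℕ → Set ℝ := fun i => Set.Ioc ((i : ℝ) * Δ) ((i + 1 : ℝ) * Δ) with hS
  set F : ℝ → ℝ := fun t => ‖j (u (t - Δ)) - j (u t)‖ / Δ with hF
  have hEq : ∀ i ∈ Finset.Ioc 0 M, Set.EqOn F (fun _ => DJd j u Δ i / Δ) (S i) := by
    intro i hi t ht
    simp only [Finset.mem_Ioc] at hi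
    have h1 : u t = DJav u Δ i := hst i t _ ht ⟨by nlinarith [Nat.cast_nonneg (α := ℝ) i], le_rfl⟩
    have hcast : ((i - 1 : ℕ) : ℝ) = (i : ℝ) - 1 := by
      rw [Nat.cast_sub hi.1]; norm_num
    have h2 : u (t - Δ) = DJav u Δ (i - 1) := by
      apply hst (i - 1) (t - Δ) _ _ ⟨by rw [hcast]; nlinarith [show (1:ℝ) ≤ (i:ℝ) by exact_mod_cast hi.1], le_rfl⟩
      rw [hcast]
      obtain ⟨ht1, ht2⟩ := ht
      constructor <;> [skip; skip] <;> [nlinarith; nlinarith]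
    simp only [hF, DJd]
    rw [h1, h2, norm_sub_rev]
  have hvol : ∀ i : ℕ, (volume (S i)).toReal = Δ := by
    intro i
    rw [hS]
    simp only [Real.volume_Ioc]
    rw [ENNReal.toReal_ofReal (by nlinarith)]
    ring
  have hInt : ∀ i ∈ Finset.Ioc 0 M, IntegrableOn F (S i) := by
    intro i hi
    rw [integrableOn_congr_fun (hEq i hi) measurableSet_Ioc]
    exact integrableOn_const measure_Ioc_lt_top.ne
  have hpieceInt : ∀ i ∈ Finset.Ioc 0 M, ∫ t in S i, F t = DJd j u Δ i := by
    intro i hi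
    rw [setIntegral_congr_fun measurableSet_Ioc (hEq i hi), setIntegral_const, measureReal_def, hvol i,
      smul_eq_mul]
    field_simp
  have hdisj : Set.Pairwise ↑(Finset.Ioc 0 M) (Function.onFun Disjoint S) := by
    intro i _ i' _ hne
    rcases Nat.lt_or_ge i i' with h | h
    · apply Set.Ioc_disjoint_Ioc.mpr
      have : (i : ℝ) + 1 ≤ (i' : ℝ) := by exact_mod_cast h
      rw [min_le_iff]; left
      rw [le_max_iff]; right; nlinarith
    · have h' : i' < i := by omega
      apply Set.Ioc_disjoint_Ioc.mpr
      have : (i' : ℝ) + 1 ≤ (i : ℝ) := by exact_mod_cast h'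
      rw [min_le_iff]; right
      rw [le_max_iff]; left; nlinarith
  have hbi := MeasureTheory.integral_biUnion_finset (μ := volume) (f := F) (Finset.Ioc 0 M)
    (fun i _ => measurableSet_Ioc) hdisj hInt
  rw [DJunion hΔ M] at hbi
  have : (M + 1 : ℕ) - 1 = M := by omega
  rw [this, hMcast, hbi]
  exact (Finset.sum_congr rfl hpieceInt).symm

lemma DJstep_eq (hΔ : 0 < Δ) (hst : DJstep u Δ) {t : ℝ} (ht : 0 < t) :
    u t = DJav u Δ (DJind Δ t) :=
  hst (DJind Δ t) t _ (DJind_spec hΔ ht) (DJav_mem _ hΔ)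

lemma DJtelescope (u : ℝ → H) (Δ : ℝ) (p q : ℕ) (hpq : p ≤ q) :
    ‖j (DJav u Δ q) - j (DJav u Δ p)‖ ≤ ∑ i ∈ Finset.Ioc p q, DJd j u Δ i := by
  induction q, hpq using Nat.le_induction with
  | base => simp
  | succ q hpq ih =>
    have h1 : ‖j (DJav u Δ (q+1)) - j (DJav u Δ p)‖ ≤
        ‖j (DJav u Δ (q+1)) - j (DJav u Δ q)‖ + ‖j (DJav u Δ q) - j (DJav u Δ p)‖ :=
      norm_sub_le_norm_sub_add_norm_sub _ _ _
    rw [Finset.sum_Ioc_succ_top (by omega)]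
    have h2 : DJd j u Δ (q+1) = ‖j (DJav u Δ (q+1)) - j (DJav u Δ q)‖ := by
      simp [DJd]
    linarith

lemma DJV_nonneg (t : ℝ) : 0 ≤ DJV j u Δ t :=
  Finset.sum_nonneg fun i _ => norm_nonneg _

lemma DJV_mono (hΔ : 0 < Δ) {s t : ℝ} (h : s ≤ t) : DJV j u Δ s ≤ DJV j u Δ t :=
  Finset.sum_le_sum_of_subset_of_nonneg
    (Finset.Ioc_subset_Ioc le_rfl (DJind_mono hΔ h)) (fun i _ _ => norm_nonneg _)

lemma DJincr (hΔ : 0 < Δ) (hst : DJstep u Δ) {s t : ℝ} (hs : 0 < s) (hts : s ≤ t) :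
    ‖j (u t) - j (u s)‖ ≤ DJV j u Δ t - DJV j u Δ s := by
  rw [DJstep_eq hΔ hst (hs.trans_le hts), DJstep_eq hΔ hst hs]
  have h1 := DJtelescope j u Δ (DJind Δ s) (DJind Δ t) (DJind_mono hΔ hts)
  have h2 : DJV j u Δ s + ∑ i ∈ Finset.Ioc (DJind Δ s) (DJind Δ t), DJd j u Δ i
      = DJV j u Δ t :=
    Finset.sum_Ioc_consecutive _ (Nat.zero_le _) (DJind_mono hΔ hts)
  linarith

end

/-- Dreher–Jüngel compactness criterion for piecewise constant (in time) functions: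
with V ⋐ H (compact), H ↪ W = X' (continuous, via j), H ⋐ Y (compact, via k) and Y ↪ W
compatibly and injectively, a family u_N of piecewise constant functions with a uniform
L^∞(0,T;H) bound and a uniform L¹(Δt,T;X') bound on the discrete difference quotients
(τ_{Δt}u_N − u_N)/Δt is relatively compact in L²(0,T;Y). -/
theorem stmt_15 {H V W Y : Type*}
    [NormedAddCommGroup H] [NormedSpace ℝ H] [NormedAddCommGroup V] [NormedSpace ℝ V]
    [NormedAddCommGroup W] [NormedSpace ℝ W] [NormedAddCommGroup Y] [NormedSpace ℝ Y]
    (ιVH : V →L[ℝ] H) (hVH : IsCompactOperator ιVH)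
    (j : H →L[ℝ] W)
    (k : H →L[ℝ] Y) (hk : IsCompactOperator k) (hkinj : Function.Injective k)
    (m : Y →L[ℝ] W) (hm : ∀ h : H, m (k h) = j h) (hminj : Function.Injective m)
    (T C : ℝ) (hT : 0 < T) (hC : 0 ≤ C)
    (u : ℕ → ℝ → H)
    (hpc : ∀ N : ℕ, 0 < N → ∀ n : ℕ, ∀ t s : ℝ,
      t ∈ Set.Ioc ((n : ℝ) * (T / N)) ((n + 1 : ℝ) * (T / N)) →
      s ∈ Set.Ioc ((n : ℝ) * (T / N)) ((n + 1 : ℝ) * (T / N)) → u N t = u N s)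
    (hbdd : ∀ N : ℕ, ∀ t ∈ Set.Icc (0 : ℝ) T, ‖u N t‖ ≤ C)
    (hdq : ∀ N : ℕ, 0 < N →
      (∫ t in Set.Ioc (T / N) T, ‖j (u N (t - T / N)) - j (u N t)‖ / (T / N)) ≤ C) :
    ∃ φ : ℕ → ℕ, StrictMono φ ∧ ∃ w : ℝ → Y,
      Filter.Tendsto (fun mIdx => ∫ t in Set.Ioc (0 : ℝ) T, ‖k (u (φ mIdx) t) - w t‖ ^ 2)
        Filter.atTop (nhds 0) := by
  classical
  set μ : Measure ℝ := volume.restrict (Set.Ioc 0 T) with hμ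
  set Δf : ℕ → ℝ := fun n => T / ((n : ℝ) + 1) with hΔf
  have hΔpos : ∀ n : ℕ, 0 < Δf n := fun n => div_pos hT (by positivity)
  have hTeq : ∀ n : ℕ, ((n : ℕ) + 1 : ℝ) * Δf n = T := fun n => by
    rw [hΔf]; field_simp
  have hTeq' : ∀ n : ℕ, ((n + 1 : ℕ) : ℝ) * Δf n = T := fun n => by
    push_cast; exact hTeq n
  have hcastΔ : ∀ n : ℕ, T / ((n + 1 : ℕ) : ℝ) = Δf n := fun n => by
    rw [hΔf]; push_cast; ring
  have hstn : ∀ n : ℕ, DJstep (u (n + 1)) (Δf n) := by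
    intro n n' t s ht hs
    have h := hpc (n + 1) n.succ_pos n' t s
    rw [hcastΔ n] at h
    exact h ht hs
  -- compact sets
  set KW : Set W := closure (j '' Metric.closedBall 0 C) with hKWdef
  set KY : Set Y := closure (k '' Metric.closedBall 0 C) with hKYdef
  have hKYc : IsCompact KY :=
    IsCompactOperator.isCompact_closure_image_of_bounded (𝕜₁ := ℝ)
      (f := (k : H →ₗ[ℝ] Y)) hk Metric.isBounded_closedBall
  have hKWc : IsCompact KW := by
    have himg : j '' Metric.closedBall 0 C ⊆ m '' KY := by
      rintro x ⟨h, hh, rfl⟩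
      exact ⟨k h, subset_closure ⟨h, hh, rfl⟩, hm h⟩
    have hmKY : IsCompact (m '' KY) := hKYc.image m.continuous
    exact hmKY.of_isClosed_subset isClosed_closure (closure_minimal himg hmKY.isClosed)
  have hmemW : ∀ (n : ℕ) (t : ℝ), t ∈ Set.Icc 0 T → j (u (n + 1) t) ∈ KW := fun n t ht =>
    subset_closure ⟨u (n + 1) t, by
      simpa [Metric.mem_closedBall, dist_zero_right] using hbdd (n + 1) t ht, rfl⟩
  have hmemY : ∀ (n : ℕ) (t : ℝ), t ∈ Set.Icc 0 T → k (u (n + 1) t) ∈ KY := fun n t ht =>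
    subset_closure ⟨u (n + 1) t, by
      simpa [Metric.mem_closedBall, dist_zero_right] using hbdd (n + 1) t ht, rfl⟩
  -- uniform bound on variation
  have hVmem : ∀ (n : ℕ) (t : ℝ), t ∈ Set.Icc 0 T →
      DJV j (u (n + 1)) (Δf n) t ∈ Set.Icc (0 : ℝ) C := by
    intro n t ht
    refine ⟨DJV_nonneg _ _, ?_⟩
    have hindle : DJind (Δf n) t ≤ n := by
      have h1 : DJind (Δf n) t ≤ DJind (Δf n) T := DJind_mono (hΔpos n) ht.2
      have h2 : DJind (Δf n) T < n + 1 :=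
        DJind_lt (hΔpos n) n.succ_pos (by rw [hTeq' n])
      omega
    have hle : DJV j (u (n + 1)) (Δf n) t ≤ ∑ i ∈ Finset.Ioc 0 n, DJd j (u (n + 1)) (Δf n) i :=
      Finset.sum_le_sum_of_subset_of_nonneg
        (Finset.Ioc_subset_Ioc le_rfl hindle) (fun i _ _ => norm_nonneg _)
    have heq := DJsum_eq_int j (hΔpos n) (hstn n) (N := n + 1) n.succ_pos
    simp only [Nat.add_sub_cancel] at heq
    have hdqn := hdq (n + 1) n.succ_pos
    rw [hcastΔ n] at hdqn
    rw [show T = ((n + 1 : ℕ) : ℝ) * Δf n from (hTeq' n).symm] at hdqn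
    calc DJV j (u (n + 1)) (Δf n) t ≤ _ := hle
    _ = _ := heq
    _ ≤ C := hdqn
  -- product space extraction
  haveI hKWcs : CompactSpace ↥KW := isCompact_iff_compactSpace.mp hKWc
  haveI : CompactSpace ↥(Set.Icc (0 : ℝ) C) := isCompact_iff_compactSpace.mp isCompact_Icc
  set pt : ℚ → ℝ := fun q => if (q : ℝ) ∈ Set.Ioo 0 T then (q : ℝ) else T with hpt
  have hptmem : ∀ q, pt q ∈ Set.Icc 0 T := by
    intro q
    by_cases h : (q : ℝ) ∈ Set.Ioo 0 T
    · rw [hpt]; simp only [if_pos h]; exact ⟨h.1.le, h.2.le⟩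
    · rw [hpt]; simp only [if_neg h]; exact ⟨hT.le, le_rfl⟩
  set x : ℕ → (ℚ → (↥KW × ↥(Set.Icc (0 : ℝ) C))) := fun n q =>
    (⟨j (u (n + 1) (pt q)), hmemW n _ (hptmem q)⟩,
     ⟨DJV j (u (n + 1)) (Δf n) (pt q), hVmem n _ (hptmem q)⟩) with hx
  obtain ⟨L, φ₀, hφ₀, hφ₀lim⟩ := CompactSpace.tendsto_subseq x
  have hGq : ∀ q : ℚ, Filter.Tendsto (fun i => j (u (φ₀ i + 1) (pt q)))
      Filter.atTop (nhds ((L q).1 : W)) := by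
    intro q
    have hc : Continuous fun (y : ℚ → (↥KW × ↥(Set.Icc (0 : ℝ) C))) => ((y q).1 : W) :=
      continuous_subtype_val.comp (continuous_fst.comp (continuous_apply q))
    exact (hc.tendsto L).comp hφ₀lim
  have hVq : ∀ q : ℚ, Filter.Tendsto (fun i => DJV j (u (φ₀ i + 1)) (Δf (φ₀ i)) (pt q))
      Filter.atTop (nhds ((L q).2 : ℝ)) := by
    intro q
    have hc : Continuous fun (y : ℚ → (↥KW × ↥(Set.Icc (0 : ℝ) C))) => ((y q).2 : ℝ) :=
      continuous_subtype_val.comp (continuous_snd.comp (continuous_apply q))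
    exact (hc.tendsto L).comp hφ₀lim
  set Vt : ℚ → ℝ := fun q => ((L q).2 : ℝ) with hVt
  have hVtmem : ∀ q, Vt q ∈ Set.Icc (0 : ℝ) C := fun q => (L q).2.2
  have hVtmono : ∀ q q' : ℚ, (q : ℝ) ∈ Set.Ioo 0 T → (q' : ℝ) ∈ Set.Ioo 0 T →
      (q : ℝ) ≤ (q' : ℝ) → Vt q ≤ Vt q' := by
    intro q q' hq hq' hqq'
    refine le_of_tendsto_of_tendsto' (hVq q) (hVq q') (fun i => ?_)
    apply DJV_mono j (hΔpos _)
    rw [hpt]; simp only [if_pos hq, if_pos hq']; exact hqq'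
  -- monotone envelope
  set f : ℝ → ℝ := fun t => if t < T then
      sInf (Vt '' {q : ℚ | t < (q : ℝ) ∧ (q : ℝ) ∈ Set.Ioo 0 T}) else C + 1 with hf
  have hbddb : ∀ t : ℝ, BddBelow (Vt '' {q : ℚ | t < (q : ℝ) ∧ (q : ℝ) ∈ Set.Ioo 0 T}) :=
    fun t => ⟨0, by rintro y ⟨q, _, rfl⟩; exact (hVtmem q).1⟩
  have hne : ∀ t : ℝ, t < T →
      (Vt '' {q : ℚ | t < (q : ℝ) ∧ (q : ℝ) ∈ Set.Ioo 0 T}).Nonempty := by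
    intro t ht
    obtain ⟨q, hq1, hq2⟩ := exists_rat_btwn (show max t 0 < T from max_lt ht hT)
    exact ⟨Vt q, q, ⟨(le_max_left t 0).trans_lt hq1,
      ⟨(le_max_right t 0).trans_lt hq1, hq2⟩⟩, rfl⟩
  have hfmono : Monotone f := by
    intro t t' htt'
    by_cases h1 : t < T
    · by_cases h2 : t' < T
      · rw [hf]; simp only [if_pos h1, if_pos h2]
        refine csInf_le_csInf (hbddb t) (hne t' h2) ?_
        exact Set.image_mono (fun q hq => ⟨htt'.trans_lt hq.1, hq.2⟩)
      · rw [hf]; simp only [if_pos h1, if_neg h2]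
        obtain ⟨y, hy⟩ := hne t h1
        obtain ⟨q, hq, rfl⟩ := hy
        have := csInf_le (hbddb t) (Set.mem_image_of_mem Vt hq)
        have := (hVtmem q).2
        linarith
    · have h2 : ¬ t' < T := fun hc => h1 (lt_of_le_of_lt htt' hc)
      rw [hf]; simp [h1, h2]
  have hBadc : Set.Countable {t : ℝ | ¬ContinuousAt f t} := hfmono.countable_not_continuousAt
  -- good points
  have hgood : ∀ t ∈ Set.Ioo (0 : ℝ) T, ContinuousAt f t → ∀ ε > (0 : ℝ), ∃ q₁ q₂ : ℚ,
      (q₁ : ℝ) ∈ Set.Ioo 0 T ∧ (q₂ : ℝ) ∈ Set.Ioo 0 T ∧ (q₁ : ℝ) < t ∧ t < (q₂ : ℝ) ∧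
      Vt q₂ - Vt q₁ < ε := by
    intro t ht hcont ε hε
    obtain ⟨δ, hδ, hδprop⟩ := Metric.continuousAt_iff.mp hcont (ε / 4) (by linarith)
    set s : ℝ := max (t - δ / 2) (t / 2) with hs
    have hst : s < t := max_lt (by linarith) (by linarith [ht.1])
    have hs0 : 0 < s := lt_of_lt_of_le (by linarith [ht.1]) (le_max_right _ _)
    have hsd : dist s t < δ := by
      rw [Real.dist_eq, abs_sub_lt_iff]
      constructor
      · linarith
      · have := le_max_left (t - δ / 2) (t / 2)
        linarith
    have hfs := hδprop hsd
    rw [Real.dist_eq, abs_sub_lt_iff] at hfs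
    have hsT : s < T := hst.trans ht.2
    obtain ⟨q₁, hq₁s, hq₁t⟩ := exists_rat_btwn hst
    have hq₁Ioo : (q₁ : ℝ) ∈ Set.Ioo 0 T := ⟨hs0.trans hq₁s, hq₁t.trans ht.2⟩
    have hVq₁ : f s ≤ Vt q₁ := by
      rw [hf]; simp only [if_pos hsT]
      exact csInf_le (hbddb s) ⟨q₁, ⟨hq₁s, hq₁Ioo⟩, rfl⟩
    have htT : t < T := ht.2
    have hfteq : f t = sInf (Vt '' {q : ℚ | t < (q : ℝ) ∧ (q : ℝ) ∈ Set.Ioo 0 T}) := by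
      rw [hf]; simp [htT]
    have hlt : sInf (Vt '' {q : ℚ | t < (q : ℝ) ∧ (q : ℝ) ∈ Set.Ioo 0 T}) < f t + ε / 4 := by
      rw [← hfteq]; linarith
    obtain ⟨y, ⟨q₂, hq₂mem, rfl⟩, hy2⟩ := exists_lt_of_csInf_lt (hne t htT) hlt
    refine ⟨q₁, q₂, hq₁Ioo, hq₂mem.2, hq₁t, hq₂mem.1, ?_⟩
    have hfst : f t - f s < ε / 4 := hfs.2
    linarith
  -- convergence in W at good points
  have hconvW : ∀ t ∈ Set.Ioo (0 : ℝ) T, ContinuousAt f t →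
      ∃ z ∈ KW, Filter.Tendsto (fun i => j (u (φ₀ i + 1) t)) Filter.atTop (nhds z) := by
    intro t ht hcont
    have hcauchy : CauchySeq (fun i => j (u (φ₀ i + 1) t)) := by
      rw [Metric.cauchySeq_iff]
      intro ε hε
      obtain ⟨q₁, q₂, hq₁, hq₂, hq₁t, htq₂, hVdiff⟩ := hgood t ht hcont (ε / 8) (by linarith)
      have hpt₁ : pt q₁ = (q₁ : ℝ) := by rw [hpt]; simp [hq₁]
      have hpt₂ : pt q₂ = (q₂ : ℝ) := by rw [hpt]; simp [hq₂]
      obtain ⟨NA, hNA⟩ := Metric.tendsto_atTop.mp (hVq q₁) (ε / 8) (by linarith)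
      obtain ⟨NB, hNB⟩ := Metric.tendsto_atTop.mp (hVq q₂) (ε / 8) (by linarith)
      obtain ⟨NC, hNC⟩ := Metric.tendsto_atTop.mp (hGq q₁) (ε / 8) (by linarith)
      have hN0 : ∀ i, max NA (max NB NC) ≤ i →
          (|DJV j (u (φ₀ i + 1)) (Δf (φ₀ i)) (pt q₁) - Vt q₁| < ε / 8 ∧
           |DJV j (u (φ₀ i + 1)) (Δf (φ₀ i)) (pt q₂) - Vt q₂| < ε / 8) ∧
          dist (j (u (φ₀ i + 1) (pt q₁))) ((L q₁).1 : W) < ε / 8 := by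
        intro i hi
        rw [max_le_iff, max_le_iff] at hi
        refine ⟨⟨?_, ?_⟩, hNC i hi.2.2⟩
        · have := hNA i hi.1; rwa [Real.dist_eq] at this
        · have := hNB i hi.2.1; rwa [Real.dist_eq] at this
      set N0 := max NA (max NB NC) with hN0def
      refine ⟨N0, fun a ha b hb => ?_⟩
      obtain ⟨⟨haA, haB⟩, haC⟩ := hN0 a ha
      obtain ⟨⟨hbA, hbB⟩, hbC⟩ := hN0 b hb
      -- increment bounds
      have hkey : ∀ i, N0 ≤ i →
          dist (j (u (φ₀ i + 1) t)) (j (u (φ₀ i + 1) (pt q₁))) < 3 * ε / 8 := by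
        intro i hi
        obtain ⟨⟨hiA, hiB⟩, _⟩ := hN0 i hi
        have hincr := DJincr j (hΔpos (φ₀ i)) (hstn (φ₀ i))
          (s := (q₁ : ℝ)) (t := t) hq₁.1 hq₁t.le
        have hmono := DJV_mono j (u := u (φ₀ i + 1)) (hΔpos (φ₀ i)) htq₂.le
        rw [hpt₁] at hiA ⊢
        rw [hpt₂] at hiB
        rw [dist_eq_norm]
        rw [abs_sub_lt_iff] at hiA hiB
        calc ‖j (u (φ₀ i + 1) t) - j (u (φ₀ i + 1) (q₁ : ℝ))‖
            ≤ DJV j (u (φ₀ i + 1)) (Δf (φ₀ i)) t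
              - DJV j (u (φ₀ i + 1)) (Δf (φ₀ i)) (q₁ : ℝ) := hincr
          _ ≤ DJV j (u (φ₀ i + 1)) (Δf (φ₀ i)) (q₂ : ℝ)
              - DJV j (u (φ₀ i + 1)) (Δf (φ₀ i)) (q₁ : ℝ) := by linarith
          _ < 3 * ε / 8 := by linarith
      have h1 := hkey a ha
      have h2 := hkey b hb
      have h3 : dist (j (u (φ₀ a + 1) (pt q₁))) (j (u (φ₀ b + 1) (pt q₁))) < ε / 4 := by
        calc dist (j (u (φ₀ a + 1) (pt q₁))) (j (u (φ₀ b + 1) (pt q₁)))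
            ≤ dist (j (u (φ₀ a + 1) (pt q₁))) ((L q₁).1 : W)
              + dist (j (u (φ₀ b + 1) (pt q₁))) ((L q₁).1 : W) := dist_triangle_right _ _ _
          _ < ε / 4 := by linarith
      calc dist (j (u (φ₀ a + 1) t)) (j (u (φ₀ b + 1) t))
          ≤ dist (j (u (φ₀ a + 1) t)) (j (u (φ₀ a + 1) (pt q₁)))
            + dist (j (u (φ₀ a + 1) (pt q₁))) (j (u (φ₀ b + 1) t)) := dist_triangle _ _ _
        _ ≤ dist (j (u (φ₀ a + 1) t)) (j (u (φ₀ a + 1) (pt q₁)))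
            + (dist (j (u (φ₀ a + 1) (pt q₁))) (j (u (φ₀ b + 1) (pt q₁)))
              + dist (j (u (φ₀ b + 1) (pt q₁))) (j (u (φ₀ b + 1) t))) := by
            have := dist_triangle (j (u (φ₀ a + 1) (pt q₁))) (j (u (φ₀ b + 1) (pt q₁)))
              (j (u (φ₀ b + 1) t))
            linarith
        _ < ε := by
            have h2' : dist (j (u (φ₀ b + 1) (pt q₁))) (j (u (φ₀ b + 1) t)) < 3 * ε / 8 := by
              rw [dist_comm]; exact h2
            linarith
    obtain ⟨z, hzmem, hz⟩ := cauchySeq_tendsto_of_isComplete hKWc.isComplete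
      (fun i => hmemW (φ₀ i) t ⟨ht.1.le, ht.2.le⟩) hcauchy
    exact ⟨z, hzmem, hz⟩
  -- convergence in Y at good points
  have hconvY : ∀ t ∈ Set.Ioo (0 : ℝ) T, ContinuousAt f t →
      ∃ yl, Filter.Tendsto (fun i => k (u (φ₀ i + 1) t)) Filter.atTop (nhds yl) := by
    intro t ht hcont
    obtain ⟨z, hzKW, hz⟩ := hconvW t ht hcont
    refine DJylim hKYc m hminj (fun i => hmemY (φ₀ i) t ⟨ht.1.le, ht.2.le⟩) (z := z) ?_
    have : (fun i => m (k (u (φ₀ i + 1) t))) = fun i => j (u (φ₀ i + 1) t) := by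
      funext i; exact hm _
    rw [this]; exact hz
  set w : ℝ → Y := fun t =>
    if h : ∃ yl, Filter.Tendsto (fun i => k (u (φ₀ i + 1) t)) Filter.atTop (nhds yl)
    then h.choose else 0 with hw
  have hwt : ∀ t, (∃ yl, Filter.Tendsto (fun i => k (u (φ₀ i + 1) t)) Filter.atTop (nhds yl)) →
      Filter.Tendsto (fun i => k (u (φ₀ i + 1) t)) Filter.atTop (nhds (w t)) := by
    intro t h
    rw [hw]; simp only [dif_pos h]; exact h.choose_spec
  have haelim : ∀ᵐ t ∂μ,
      Filter.Tendsto (fun i => k (u (φ₀ i + 1) t)) Filter.atTop (nhds (w t)) := by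
    have h1 : ∀ᵐ t ∂μ, t ∈ Set.Ioc 0 T := ae_restrict_mem measurableSet_Ioc
    have h2 : ∀ᵐ t ∂μ, t ∉ ({t : ℝ | ¬ContinuousAt f t} ∪ {T}) := by
      apply ae_restrict_of_ae
      have hz : volume ({t : ℝ | ¬ContinuousAt f t} ∪ {T}) = 0 :=
        measure_union_null (hBadc.measure_zero _) (measure_singleton T)
      exact measure_eq_zero_iff_ae_notMem.mp hz
    filter_upwards [h1, h2] with t htIoc htn
    have htne : t ≠ T := fun h => htn (Or.inr (by simp [h]))
    have htIoo : t ∈ Set.Ioo (0 : ℝ) T := ⟨htIoc.1, lt_of_le_of_ne htIoc.2 htne⟩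
    have hcont : ContinuousAt f t := by
      by_contra hc; exact htn (Or.inl hc)
    exact hwt t (hconvY t htIoo hcont)
  -- measurability
  have hmeasn : ∀ i : ℕ, AEStronglyMeasurable (fun t => k (u (φ₀ i + 1) t)) μ := by
    intro i
    set n := φ₀ i with hn
    set F : ℝ → Y := fun t => ∑ p ∈ Finset.range (n + 1),
      (Set.Ioc ((p : ℝ) * Δf n) ((p + 1 : ℝ) * Δf n)).indicator
        (fun _ => k (DJav (u (n + 1)) (Δf n) p)) t with hF
    have hFsm : StronglyMeasurable F := by
      apply Finset.stronglyMeasurable_fun_sum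
      intro p _
      exact stronglyMeasurable_const.indicator measurableSet_Ioc
    have heq : Set.EqOn (fun t => k (u (n + 1) t)) F (Set.Ioc 0 T) := by
      intro t ht
      have hind : DJind (Δf n) t < n + 1 :=
        DJind_lt (hΔpos n) n.succ_pos (by rw [hTeq' n]; exact ht.2)
      have hstep : u (n + 1) t = DJav (u (n + 1)) (Δf n) (DJind (Δf n) t) :=
        DJstep_eq (hΔpos n) (hstn n) ht.1
      show k (u (n + 1) t) = F t
      rw [hF]
      simp only
      rw [Finset.sum_eq_single_of_mem (DJind (Δf n) t) (Finset.mem_range.mpr hind)]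
      · rw [Set.indicator_of_mem (DJind_spec (hΔpos n) ht.1), hstep]
      · intro p _ hp
        apply Set.indicator_of_notMem
        intro hmem
        exact hp (DJind_eq (hΔpos n) p hmem).symm
    exact ⟨F, hFsm, by
      filter_upwards [ae_restrict_mem measurableSet_Ioc] with t ht using heq ht⟩
  have hwmeas : AEStronglyMeasurable w μ :=
    aestronglyMeasurable_of_tendsto_ae Filter.atTop hmeasn haelim
  -- dominated convergence
  have hptbd : ∀ (i : ℕ) (t : ℝ), t ∈ Set.Icc 0 T → ‖k (u (φ₀ i + 1) t)‖ ≤ ‖k‖ * C :=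
    fun i t ht => (k.le_opNorm _).trans
      (mul_le_mul_of_nonneg_left (hbdd _ t ht) (norm_nonneg (k : H →L[ℝ] Y)))
  have hwbd : ∀ᵐ t ∂μ, ‖w t‖ ≤ ‖k‖ * C := by
    filter_upwards [haelim, ae_restrict_mem measurableSet_Ioc] with t hlim ht
    have hnl : Filter.Tendsto (fun i => ‖k (u (φ₀ i + 1) t)‖) Filter.atTop (nhds ‖w t‖) :=
      hlim.norm
    exact le_of_tendsto hnl (Filter.Eventually.of_forall fun i =>
      hptbd i t (Set.Ioc_subset_Icc_self ht))
  have hdom : Filter.Tendsto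
      (fun i => ∫ t, ‖k (u (φ₀ i + 1) t) - w t‖ ^ 2 ∂μ)
      Filter.atTop (nhds (∫ _, (0 : ℝ) ∂μ)) := by
    apply MeasureTheory.tendsto_integral_of_dominated_convergence
      (bound := fun _ => (2 * (‖k‖ * C)) ^ 2)
    · intro i
      have h1 : AEStronglyMeasurable (fun t => ‖k (u (φ₀ i + 1) t) - w t‖) μ :=
        ((hmeasn i).sub hwmeas).norm
      have : (fun t => ‖k (u (φ₀ i + 1) t) - w t‖ ^ 2)
          = fun t => ‖k (u (φ₀ i + 1) t) - w t‖ * ‖k (u (φ₀ i + 1) t) - w t‖ := by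
        funext t; ring
      rw [this]
      exact h1.mul h1
    · exact MeasureTheory.integrable_const _
    · intro i
      filter_upwards [hwbd, ae_restrict_mem measurableSet_Ioc] with t hwb ht
      have hd : ‖k (u (φ₀ i + 1) t) - w t‖ ≤ 2 * (‖k‖ * C) := by
        calc ‖k (u (φ₀ i + 1) t) - w t‖ ≤ ‖k (u (φ₀ i + 1) t)‖ + ‖w t‖ := norm_sub_le _ _
          _ ≤ ‖k‖ * C + (‖k‖ * C) := add_le_add (hptbd i t (Set.Ioc_subset_Icc_self ht)) hwb
          _ = 2 * (‖k‖ * C) := by ring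
      have hnn : (0 : ℝ) ≤ ‖k (u (φ₀ i + 1) t) - w t‖ := norm_nonneg _
      rw [Real.norm_eq_abs, abs_of_nonneg (by positivity)]
      exact pow_le_pow_left₀ hnn hd 2
    · filter_upwards [haelim] with t hlim
      have h0 : Filter.Tendsto (fun i => k (u (φ₀ i + 1) t) - w t) Filter.atTop (nhds 0) := by
        simpa using hlim.sub (tendsto_const_nhds (x := w t))
      have h1 := (h0.norm).pow 2
      simpa using h1
  refine ⟨fun i => φ₀ i + 1, fun a b hab => by simpa using Nat.succ_lt_succ (hφ₀ hab), w, ?_⟩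
  have hint0 : (∫ _, (0 : ℝ) ∂μ) = 0 := integral_zero _ _
  rw [hint0] at hdom
  exact hdom
end
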